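/- arXiv:1502.06360 — 8 statements merged into one kernel-verified Lean document; each statement's English description precedes it below -/
import Mathlib

section
/- In infinitary CCS with success, for all processes r₁ and r₂: r₁ ⊑_p2p r₂ implies r₁ ⊑_clt r₂. (The peer preorder is contained in the client preorder.) -/
namespace MTP

/-- Processes of infinitary CCS with success.
`pre none p` is `τ.p`, `pre (some a) p` is `a.p`.
`sum f` is a countable sum `Σ_{i∈I} p_i` where `I = {n | f n ≠ none}`. -/
inductive Proc (Act : Type) (Const : Type) : Type where
  | one : Proc Act Const
  | const : Const → Proc Act Const
  | pre : Option Act → Proc Act Const → Proc Act Const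
  | sum : (ℕ → Option (Proc Act Const)) → Proc Act Const

namespace Proc
/-- The empty sum `0`. -/
def nil {Act Const : Type} : Proc Act Const := .sum fun _ => none
/-- Binary external sum `p + q`. -/
def ext {Act Const : Type} (p q : Proc Act Const) : Proc Act Const :=
  .sum fun n => if n = 0 then some p else if n = 1 then some q else none
end Proc

/-- Labels: visible actions, τ, and the success action ✓. -/
inductive Label (Act : Type) : Type where
  | act : Act → Label Act
  | tau : Label Act
  | ok : Label Act

/-- A CCS signature: an involutive complementation on actions, together with
a definition for every constant. -/
structure CCS (Act : Type) (Const : Type) : Type where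
  co : Act → Act
  co_invol : ∀ a, co (co a) = a
  defn : Const → Proc Act Const

variable {Act Const : Type}

/-- The transition relation of infinitary CCS with success. -/
inductive Step (S : CCS Act Const) : Proc Act Const → Label Act → Proc Act Const → Prop where
  | one : Step S .one .ok .nil
  | preAct (a : Act) (p : Proc Act Const) : Step S (.pre (some a) p) (.act a) p
  | preTau (p : Proc Act Const) : Step S (.pre none p) .tau p
  | sum {f : ℕ → Option (Proc Act Const)} {i : ℕ} {p q : Proc Act Const} {l : Label Act} :
      f i = some p → Step S p l q → Step S (.sum f) l q
  | const {A : Const} {l : Label Act} {q : Proc Act Const} :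
      Step S (S.defn A) l q → Step S (.const A) l q

/-- `p` can report success. -/
def CanOk (S : CCS Act Const) (p : Proc Act Const) : Prop := ∃ q, Step S p .ok q

/-- `p` has no τ-transition. -/
def Stable (S : CCS Act Const) (p : Proc Act Const) : Prop := ¬ ∃ q, Step S p .tau q

/-- τ-transitions of a parallel composition `p ∥ r` (server component first). -/
inductive ParTau (S : CCS Act Const) :
    Proc Act Const × Proc Act Const → Proc Act Const × Proc Act Const → Prop where
  | left {p p' r : Proc Act Const} : Step S p .tau p' → ParTau S (p, r) (p', r)
  | right {p r r' : Proc Act Const} : Step S r .tau r' → ParTau S (p, r) (p, r')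
  | sync {p p' r r' : Proc Act Const} {a : Act} :
      Step S p (.act a) p' → Step S r (.act (S.co a)) r' → ParTau S (p, r) (p', r')

/-- A state of a composition is stuck if it has no τ-transition. -/
def StateStuck (S : CCS Act Const) (st : Proc Act Const × Proc Act Const) : Prop :=
  ¬ ∃ t, ParTau S st t

/-- `ρ` encodes a maximal computation: at each stage either a real τ-step is taken, or the
state is stuck and stutters forever (encoding a finite maximal computation). -/
def MaxComp (S : CCS Act Const) (ρ : ℕ → Proc Act Const × Proc Act Const) : Prop :=
  ∀ k, ParTau S (ρ k) (ρ (k + 1)) ∨ (StateStuck S (ρ k) ∧ ρ (k + 1) = ρ k)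

/-- `p Must r`: every maximal computation of `p ∥ r` is client-successful. -/
def Must (S : CCS Act Const) (p r : Proc Act Const) : Prop :=
  ∀ ρ : ℕ → Proc Act Const × Proc Act Const,
    ρ 0 = (p, r) → MaxComp S ρ → ∃ k, CanOk S (ρ k).2

/-- `p MustSC r`: every maximal computation of `p ∥ r` is successful (both components
eventually can report success). -/
def MustSC (S : CCS Act Const) (p r : Proc Act Const) : Prop :=
  ∀ ρ : ℕ → Proc Act Const × Proc Act Const,
    ρ 0 = (p, r) → MaxComp S ρ → (∃ k, CanOk S (ρ k).2) ∧ (∃ l, CanOk S (ρ l).1)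

/-- The server testing preorder `p ⊑_svr q`. -/
def svrLe (S : CCS Act Const) (p q : Proc Act Const) : Prop :=
  ∀ r, Must S p r → Must S q r

/-- The client testing preorder `r₁ ⊑_clt r₂`. -/
def cltLe (S : CCS Act Const) (r₁ r₂ : Proc Act Const) : Prop :=
  ∀ p, Must S p r₁ → Must S p r₂

/-- The peer testing preorder `p ⊑_p2p q`. -/
def p2pLe (S : CCS Act Const) (p q : Proc Act Const) : Prop :=
  ∀ r, MustSC S p r → MustSC S q r

/-- Weak transition `p ⟹^s q` for finite traces `s ∈ Act*`. -/
inductive Weak (S : CCS Act Const) : Proc Act Const → List Act → Proc Act Const → Prop where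
  | refl (p : Proc Act Const) : Weak S p [] p
  | tau {p p' q : Proc Act Const} {s : List Act} :
      Step S p .tau p' → Weak S p' s q → Weak S p s q
  | act {p p' q : Proc Act Const} {a : Act} {s : List Act} :
      Step S p (.act a) p' → Weak S p' s q → Weak S p (a :: s) q

/-- Unsuccessful weak transition `p ⟹̸✓^s q`: as `Weak` but no state passed through
(including the end points) can report success. -/
inductive UWeak (S : CCS Act Const) : Proc Act Const → List Act → Proc Act Const → Prop where
  | refl {p : Proc Act Const} : ¬ CanOk S p → UWeak S p [] p
  | tau {p p' q : Proc Act Const} {s : List Act} :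
      ¬ CanOk S p → Step S p .tau p' → UWeak S p' s q → UWeak S p s q
  | act {p p' q : Proc Act Const} {a : Act} {s : List Act} :
      ¬ CanOk S p → Step S p (.act a) p' → UWeak S p' s q → UWeak S p (a :: s) q

/-- View `Option Act` (`none` = τ) as a label. -/
def optLabel : Option Act → Label Act
  | some a => .act a
  | none => .tau

/-- The length-`n` prefix of an infinite trace `u ∈ Act^∞`. -/
def prefixList (u : ℕ → Act) (n : ℕ) : List Act := List.ofFn fun i : Fin n => u i.1

/-- Infinite weak transition `p ⟹^u` for `u ∈ Act^∞`. -/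
def InfWeak (S : CCS Act Const) (p : Proc Act Const) (u : ℕ → Act) : Prop :=
  ∃ (ρ : ℕ → Proc Act Const) (ℓ : ℕ → Option Act),
    ρ 0 = p ∧ (∀ k, Step S (ρ k) (optLabel (ℓ k)) (ρ (k + 1))) ∧
    ∀ n, ∃ k, (List.range k).filterMap ℓ = prefixList u n

/-- Infinite unsuccessful weak transition `p ⟹̸✓^u` for `u ∈ Act^∞`. -/
def InfUWeak (S : CCS Act Const) (p : Proc Act Const) (u : ℕ → Act) : Prop :=
  ∃ (ρ : ℕ → Proc Act Const) (ℓ : ℕ → Option Act),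
    ρ 0 = p ∧ (∀ k, Step S (ρ k) (optLabel (ℓ k)) (ρ (k + 1))) ∧
    (∀ k, ¬ CanOk S (ρ k)) ∧
    ∀ n, ∃ k, (List.range k).filterMap ℓ = prefixList u n

/-- `p ⇓`: no infinite sequence of τ-transitions from `p`. -/
def Conv (S : CCS Act Const) (p : Proc Act Const) : Prop :=
  ¬ ∃ ρ : ℕ → Proc Act Const, ρ 0 = p ∧ ∀ k, Step S (ρ k) .tau (ρ (k + 1))

/-- `p after s`. -/
def after (S : CCS Act Const) (p : Proc Act Const) (s : List Act) : Set (Proc Act Const) :=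
  {q | Weak S p s q}

/-- `p afterU s`: residuals after unsuccessful traces. -/
def afterU (S : CCS Act Const) (p : Proc Act Const) (s : List Act) : Set (Proc Act Const) :=
  {q | UWeak S p s q}

-- `⊕X = Σ_{x∈X} τ.x` for a nonempty countable set `X` (junk value otherwise).
open scoped Classical in
noncomputable def bigOplus (X : Set (Proc Act Const)) : Proc Act Const :=
  if h : ∃ f : ℕ → Proc Act Const, Set.range f = X then
    Proc.sum fun n => some (.pre none (h.choose n))
  else Proc.nil

/-- The ready set `S(q)`. -/
def ready (S : CCS Act Const) (q : Proc Act Const) : Set Act :=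
  {a | ∃ q', Step S q (.act a) q'}

/-- The acceptance set `A(p, s)`. -/
def acc (S : CCS Act Const) (p : Proc Act Const) (s : List Act) : Set (Set Act) :=
  {A | ∃ q, Weak S p s q ∧ Stable S q ∧ A = ready S q}

/-- The unsuccessful acceptance set `A✗(p, s)`. -/
def accU (S : CCS Act Const) (p : Proc Act Const) (s : List Act) : Set (Set Act) :=
  {A | ∃ q, UWeak S p s q ∧ Stable S q ∧ A = ready S q}

/-- The usable clients. -/
def Uclt (S : CCS Act Const) : Set (Proc Act Const) := {r | ∃ p, Must S p r}

/-- The usable servers. -/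
def Usvr (S : CCS Act Const) : Set (Proc Act Const) := {p | ∃ r, Must S p r}

/-- Client usability along an unsuccessful trace: `r ⇓U s`. -/
def usbU (S : CCS Act Const) : Proc Act Const → List Act → Prop
  | r, [] => r ∈ Uclt S
  | r, a :: s => r ∈ Uclt S ∧ ((∃ q, UWeak S r [a] q) → usbU S (bigOplus (afterU S r [a])) s)

/-- Client usability along an infinite trace. -/
def usbUInf (S : CCS Act Const) (r : Proc Act Const) (u : ℕ → Act) : Prop :=
  ∀ n, usbU S r (prefixList u n)

/-- Usable actions of a client after `s`: `uaU(r, s)`. -/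
def uaU (S : CCS Act Const) (r : Proc Act Const) (s : List Act) : Set Act :=
  {a | (∃ q, UWeak S r (s ++ [a]) q) → usbU S r (s ++ [a])}

/-- Convergence along a trace: `p ⇓ s`. -/
def convAlong (S : CCS Act Const) : Proc Act Const → List Act → Prop
  | p, [] => Conv S p
  | p, a :: s => Conv S p ∧ ((∃ q, Weak S p [a] q) → convAlong S (bigOplus (after S p [a])) s)

/-- Server usability along a trace: `p ⇓U' s`. -/
def usbS (S : CCS Act Const) : Proc Act Const → List Act → Prop
  | p, [] => p ∈ Usvr S
  | p, a :: s => p ∈ Usvr S ∧ ((∃ q, Weak S p [a] q) → usbS S (bigOplus (after S p [a])) s)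

/-- Server convergence `p ⇓svr s`. -/
def convS (S : CCS Act Const) (p : Proc Act Const) (s : List Act) : Prop :=
  convAlong S p s ∧ usbS S p s

/-- Server convergence along an infinite trace. -/
def convSInf (S : CCS Act Const) (p : Proc Act Const) (u : ℕ → Act) : Prop :=
  ∀ n, convS S p (prefixList u n)

/-- Usable actions of a server after `s`: `uaS(p, s)`. -/
def uaS (S : CCS Act Const) (p : Proc Act Const) (s : List Act) : Set Act :=
  {a | (∃ q, Weak S p s q) → usbS S p (s ++ [a])}

/-- Peer convergence `p ⇓p2p s`. -/
def convP (S : CCS Act Const) (p : Proc Act Const) (s : List Act) : Prop :=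
  convAlong S p s ∧ usbU S p s

/-- Peer convergence along an infinite trace. -/
def convPInf (S : CCS Act Const) (p : Proc Act Const) (u : ℕ → Act) : Prop :=
  ∀ n, convP S p (prefixList u n)

/-- The semantic client preorder `r₁ ≼_clt r₂`. -/
def semClt (S : CCS Act Const) (r₁ r₂ : Proc Act Const) : Prop :=
  (∀ s : List Act, usbU S r₁ s →
    usbU S r₂ s ∧ ∀ B ∈ accU S r₂ s, ∃ A ∈ accU S r₁ s, A ∩ uaU S r₁ s ⊆ B) ∧
  (∀ s : List Act, usbU S r₁ s → (∃ q, UWeak S r₂ s q) → ∃ q, UWeak S r₁ s q) ∧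
  (∀ u : ℕ → Act, usbUInf S r₁ u → InfUWeak S r₂ u → InfUWeak S r₁ u)

/-- The semantic server preorder `p ≼_svr q`. -/
def semSvr (S : CCS Act Const) (p q : Proc Act Const) : Prop :=
  (∀ s : List Act, convS S p s →
    convS S q s ∧ ∀ B ∈ acc S q s, ∃ A ∈ acc S p s, A ∩ uaS S p s ⊆ B) ∧
  (∀ s : List Act, convS S p s → (∃ q', Weak S q s q') → ∃ p', Weak S p s p') ∧
  (∀ u : ℕ → Act, convSInf S p u → InfWeak S q u → InfWeak S p u)

/-- The auxiliary semantic peer relation `p ≼'_p2p q`. -/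
def semP2pAux (S : CCS Act Const) (p q : Proc Act Const) : Prop :=
  (∀ s : List Act, convP S p s →
    convAlong S q s ∧ ∀ B ∈ acc S q s, ∃ A ∈ acc S p s, A ∩ uaU S p s ⊆ B) ∧
  (∀ s : List Act, convP S p s → (∃ q', Weak S q s q') → ∃ p', Weak S p s p') ∧
  (∀ u : ℕ → Act, convPInf S p u → InfWeak S q u → InfWeak S p u)

/-- The semantic peer preorder `p ≼_p2p q`. -/
def semP2p (S : CCS Act Const) (p q : Proc Act Const) : Prop :=
  semClt S p q ∧ semP2pAux S p q

end MTP

section Aux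

open MTP

variable {Act Const : Type} {S : CCS Act Const}

/-- `lift p = p + 1`. -/
def LiftP {Act Const : Type} (p : Proc Act Const) : Proc Act Const :=
  Proc.ext p Proc.one

/-- `q' = q` or `q' = q + 1`. -/
def RelP {Act Const : Type} (q q' : Proc Act Const) : Prop :=
  q' = q ∨ q' = LiftP q

lemma canOk_liftP (p : Proc Act Const) : CanOk S (LiftP p) :=
  ⟨Proc.nil, Step.sum (i := 1) (by simp [LiftP, Proc.ext]) Step.one⟩

lemma step_liftP_elim {q x : Proc Act Const} {l : Label Act}
    (h : Step S (LiftP q) l x) : Step S q l x ∨ (l = .ok ∧ x = Proc.nil) := by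
  cases h with
  | sum hf hs =>
    rename_i i p₁
    simp only [LiftP, Proc.ext] at hf
    split_ifs at hf with h0 h1
    · cases hf; exact Or.inl hs
    · cases hf; cases hs; exact Or.inr ⟨rfl, rfl⟩

lemma rel_step_fwd {q q' x : Proc Act Const} {l : Label Act}
    (hr : RelP q q') (h : Step S q l x) : Step S q' l x := by
  rcases hr with rfl | rfl
  · exact h
  · exact Step.sum (i := 0) (by simp [LiftP, Proc.ext]) h

lemma rel_step_bwd {q q' x : Proc Act Const} {l : Label Act}
    (hr : RelP q q') (h : Step S q' l x) (hl : l ≠ .ok) : Step S q l x := by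
  rcases hr with rfl | rfl
  · exact h
  · rcases step_liftP_elim h with h' | ⟨h', _⟩
    · exact h'
    · exact absurd h' hl

/-- Swap a step of `(q, w)` to a step of `(w, q')` where `RelP q q'`. -/
lemma swapStepEq {q q' w x y : Proc Act Const}
    (hq : RelP q q') (h : ParTau S (q, w) (x, y)) :
    ∃ x', ParTau S (w, q') (y, x') ∧ RelP x x' := by
  cases h with
  | left hs => exact ⟨x, ParTau.right (rel_step_fwd hq hs), Or.inl rfl⟩
  | right hs => exact ⟨q', ParTau.left hs, hq⟩
  | sync hs hr =>
    rename_i a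
    refine ⟨x, ParTau.sync (a := S.co a) hr ?_, Or.inl rfl⟩
    rw [S.co_invol]
    exact rel_step_fwd hq hs

/-- Swap a step of `(w, q')` to a step of `(q, w)` where `RelP q q'`. -/
lemma swapStepEq' {q q' w : Proc Act Const} {t : Proc Act Const × Proc Act Const}
    (hq : RelP q q') (h : ParTau S (w, q') t) :
    ∃ u, ParTau S (q, w) (u, t.1) ∧ RelP u t.2 := by
  cases h with
  | left hs => exact ⟨q, ParTau.right hs, hq⟩
  | right hs =>
    exact ⟨_, ParTau.left (rel_step_bwd hq hs (by simp)), Or.inl rfl⟩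
  | sync hs hr =>
    rename_i p' r' a
    refine ⟨r', ParTau.sync (a := S.co a) (rel_step_bwd hq hr (by simp)) ?_, Or.inl rfl⟩
    rw [S.co_invol]
    exact hs

/-- Generic transfer of maximal computations along a simulation. -/
lemma sim_transfer {R : (Proc Act Const × Proc Act Const) → (Proc Act Const × Proc Act Const) → Prop}
    (hstep : ∀ s s' t, R s t → ParTau S s s' → ∃ t', ParTau S t t' ∧ R s' t')
    (hstuck : ∀ s t, R s t → StateStuck S s → StateStuck S t)
    (σ : ℕ → Proc Act Const × Proc Act Const) (hm : MaxComp S σ)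
    (t₀ : Proc Act Const × Proc Act Const) (h0 : R (σ 0) t₀) :
    ∃ ρ, ρ 0 = t₀ ∧ MaxComp S ρ ∧ ∀ k, R (σ k) (ρ k) := by
  have H : ∀ k t, R (σ k) t →
      ∃ t', R (σ (k + 1)) t' ∧ (ParTau S t t' ∨ (StateStuck S t ∧ t' = t)) := by
    intro k t ht
    rcases hm k with hs | ⟨hst, heq⟩
    · obtain ⟨t', h1, h2⟩ := hstep _ _ _ ht hs
      exact ⟨t', h2, Or.inl h1⟩
    · exact ⟨t, by rw [heq]; exact ht, Or.inr ⟨hstuck _ _ ht hst, rfl⟩⟩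
  let f : ∀ k, {t // R (σ k) t} := fun k =>
    Nat.rec (motive := fun k => {t // R (σ k) t}) ⟨t₀, h0⟩
      (fun n ih => ⟨(H n ih.1 ih.2).choose, (H n ih.1 ih.2).choose_spec.1⟩) k
  refine ⟨fun k => (f k).1, rfl, ?_, fun k => (f k).2⟩
  intro k
  exact (H k (f k).1 (f k).2).choose_spec.2

end Aux


/-- The peer preorder is contained in the client preorder (Proposition 3.14). -/
theorem peer_le_implies_client_le {Act Const : Type} (S : MTP.CCS Act Const)
    (r₁ r₂ : MTP.Proc Act Const) :
    MTP.p2pLe S r₁ r₂ → MTP.cltLe S r₁ r₂ := by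
  open MTP in
  intro h p hp
  -- Simulation from lifted world `(r, p+1)` to real world `(p', r)`:
  -- `R₁ s t` : s = (r-side, lifted p-side), t = (p-side, r-side).
  set R₁ : (Proc Act Const × Proc Act Const) → (Proc Act Const × Proc Act Const) → Prop :=
    fun s t => s.1 = t.2 ∧ RelP t.1 s.2 with hR₁
  set R₂ : (Proc Act Const × Proc Act Const) → (Proc Act Const × Proc Act Const) → Prop :=
    fun s t => s.2 = t.1 ∧ RelP s.1 t.2 with hR₂
  have hstep₁ : ∀ s s' t, R₁ s t → MTP.ParTau S s s' → ∃ t', MTP.ParTau S t t' ∧ R₁ s' t' := by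
    rintro ⟨w, q'⟩ s' ⟨tq, tw⟩ ⟨h1, h2⟩ hs
    simp only [hR₁] at h1 h2 ⊢
    subst h1
    obtain ⟨u, hu, hrel⟩ := swapStepEq' h2 hs
    exact ⟨(u, s'.1), hu, rfl, hrel⟩
  have hstuck₁ : ∀ s t, R₁ s t → MTP.StateStuck S s → MTP.StateStuck S t := by
    rintro ⟨w, q'⟩ ⟨tq, tw⟩ ⟨h1, h2⟩ hst ⟨⟨x, y⟩, ht⟩
    simp only [hR₁] at h1 h2
    subst h1
    obtain ⟨x', hx', _⟩ := swapStepEq h2 ht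
    exact hst ⟨_, hx'⟩
  have hstep₂ : ∀ s s' t, R₂ s t → MTP.ParTau S s s' → ∃ t', MTP.ParTau S t t' ∧ R₂ s' t' := by
    rintro ⟨q, w⟩ ⟨x, y⟩ ⟨tw, tq'⟩ ⟨h1, h2⟩ hs
    simp only [hR₂] at h1 h2 ⊢
    subst h1
    obtain ⟨x', hx', hrel⟩ := swapStepEq h2 hs
    exact ⟨(y, x'), hx', rfl, hrel⟩
  have hstuck₂ : ∀ s t, R₂ s t → MTP.StateStuck S s → MTP.StateStuck S t := by
    rintro ⟨q, w⟩ ⟨tw, tq'⟩ ⟨h1, h2⟩ hst ⟨t', ht⟩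
    simp only [hR₂] at h1 h2
    subst h1
    obtain ⟨u, hu, _⟩ := swapStepEq' h2 ht
    exact hst ⟨_, hu⟩
  have h1 : MTP.MustSC S r₁ (LiftP p) := by
    intro σ h0 hm
    obtain ⟨ρ, hρ0, hρm, hrel⟩ := sim_transfer hstep₁ hstuck₁ σ hm (p, r₁)
      (by rw [h0]; exact ⟨rfl, Or.inr rfl⟩)
    refine ⟨⟨0, by rw [h0]; exact canOk_liftP p⟩, ?_⟩
    obtain ⟨k, hk⟩ := hp ρ hρ0 hρm
    exact ⟨k, (hrel k).1 ▸ hk⟩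
  have h2 := h (LiftP p) h1
  intro ρ h0 hm
  obtain ⟨σ, hσ0, hσm, hrel⟩ := sim_transfer hstep₂ hstuck₂ ρ hm (r₂, LiftP p)
    (by rw [h0]; exact ⟨rfl, Or.inr rfl⟩)
  obtain ⟨_, l, hl⟩ := h2 σ hσ0 hσm
  exact ⟨l, (hrel l).1 ▸ hl⟩
end

section
/- Suppose p Must r and p ⟹^{s̄} q, where s̄ is the pointwise complement of s ∈ Act*. Then r ⟹̸✓^s r' implies q Must r'. -/
section Aux
open MTP

variable {Act Const : Type} {S : MTP.CCS Act Const}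

/-- One τ-step of the composition preserves `Must` forward, provided the
current client cannot report success. -/
private lemma must_step {p p' r r' : Proc Act Const}
    (hM : Must S p r) (hOk : ¬ CanOk S r) (hstep : ParTau S (p, r) (p', r')) :
    Must S p' r' := by
  intro ρ hρ0 hmax
  set ρ' : ℕ → Proc Act Const × Proc Act Const :=
    fun k => Nat.rec (p, r) (fun j _ => ρ j) k with hρ'
  have hmax' : MaxComp S ρ' := by
    intro k
    cases k with
    | zero => left; simpa [hρ', hρ0] using hstep
    | succ j =>
      have := hmax j
      simpa [hρ'] using this
  obtain ⟨k, hk⟩ := hM ρ' rfl hmax'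
  cases k with
  | zero => exact absurd (by simpa [hρ'] using hk) hOk
  | succ j => exact ⟨j, by simpa [hρ'] using hk⟩

/-- A chain of server τ-steps preserves `Must` forward, provided the client
cannot report success. -/
private lemma must_tau_chain {p q r : Proc Act Const} {s : List Act}
    (hW : Weak S p s q) (hs : s = []) (hM : Must S p r) (hOk : ¬ CanOk S r) :
    Must S q r := by
  induction hW with
  | refl => exact hM
  | tau h _ ih => exact ih hs (must_step hM hOk (ParTau.left h))
  | act h _ ih => cases hs

/-- Decomposition of a weak transition with a nonempty trace. -/
private lemma weak_cons {p q : Proc Act Const} {s : List Act}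
    (hW : Weak S p s q) : ∀ b t, s = b :: t →
      ∃ p₀ p₁, Weak S p [] p₀ ∧ Step S p₀ (Label.act b) p₁ ∧ Weak S p₁ t q := by
  induction hW with
  | refl => intro b t h; cases h
  | tau h _ ih =>
    intro b t hbt
    obtain ⟨p₀, p₁, h1, h2, h3⟩ := ih b t hbt
    exact ⟨p₀, p₁, Weak.tau h h1, h2, h3⟩
  | act h hW' _ =>
    intro b t hbt
    cases hbt
    exact ⟨_, _, Weak.refl _, h, hW'⟩

private lemma main_aux {r r' : Proc Act Const} {s : List Act}
    (hU : UWeak S r s r') :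
    ∀ p q, Weak S p (s.map S.co) q → Must S p r → Must S q r' := by
  induction hU with
  | refl hOk =>
    intro p q hW hM
    exact must_tau_chain hW rfl hM hOk
  | tau hOk hstep _ ih =>
    intro p q hW hM
    exact ih p q hW (must_step hM hOk (ParTau.right hstep))
  | @act r r₁ r' a s hOk hstep _ ih =>
    intro p q hW hM
    obtain ⟨p₀, p₁, h1, h2, h3⟩ := weak_cons hW (S.co a) (s.map S.co) (by simp)
    have hM₀ : Must S p₀ r := must_tau_chain h1 rfl hM hOk
    have hsync : ParTau S (p₀, r) (p₁, r₁) := by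
      refine ParTau.sync h2 ?_
      rw [S.co_invol]
      exact hstep
    exact ih p₁ q h3 (must_step hM₀ hOk hsync)

end Aux

/-- Lemma 4.1: if `p Must r` and `p ⟹^s̄ q` then `r ⟹̸✓^s r'` implies `q Must r'`. -/
theorem must_unsuccessful_residual {Act Const : Type} (S : MTP.CCS Act Const)
    (p r q r' : MTP.Proc Act Const) (s : List Act)
    (hMust : MTP.Must S p r)
    (hWeak : MTP.Weak S p (s.map S.co) q)
    (hU : MTP.UWeak S r s r') :
    MTP.Must S q r' := by
  exact main_aux hU p q hWeak hMust
end

section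
/- Suppose p Must r and p ⟹^{s̄} q, where s̄ is the pointwise complement of s ∈ Act*. Then r ⇓U s (r is client-usable along the unsuccessful trace s). -/
/-! By induction on `s`. The server's weak transition starts with `p ⟹ p₀ --ā--> p₁`;
synchronising it with an unsuccessful `a`-derivation `r ⟹̸✓^a x` of the client shows
`p₁ Must x` for every `x ∈ r afterU a`. That set is countable (every transition is selected by
a finite list of summand indices) and consists of unsuccessful processes, so
`p₁ Must ⊕(r afterU a)`, and the induction hypothesis applies to `p₁ ⟹^{s̄} q`. -/

theorem Relation.countable_setOf_reflTransGen {α : Type*} {R : α → α → Prop}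
    (hR : ∀ a, {b | R a b}.Countable) (a : α) : {b | Relation.ReflTransGen R a b}.Countable := by
  set F : Set α → Set α := fun s => ⋃ b ∈ s, {c | R b c}
  have hF : ∀ n, (F^[n] {a}).Countable := by
    intro n
    induction n with
    | zero => exact Set.countable_singleton a
    | succ n ih =>
      rw [Function.iterate_succ_apply']
      exact ih.biUnion fun b _ => hR b
  refine (Set.countable_iUnion hF).mono fun b hb => ?_
  induction hb with
  | refl => exact Set.mem_iUnion.2 ⟨0, rfl⟩
  | tail _ hbc ih =>
    obtain ⟨n, hn⟩ := Set.mem_iUnion.1 ih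
    refine Set.mem_iUnion.2 ⟨n + 1, ?_⟩
    rw [Function.iterate_succ_apply']
    exact Set.mem_biUnion hn hbc

namespace MTP

open Relation

variable {Act Const : Type} {S : CCS Act Const}

/-- The target of the transition of `p` selected by the summand indices `L`; a constant
consumes one (ignored) index, so that the recursion is structural in `L`. -/
def residual (S : CCS Act Const) : List ℕ → Proc Act Const → Option (Proc Act Const)
  | [], .one => some .nil
  | [], .pre _ p => some p
  | i :: L, .sum f => (f i).bind (residual S L)
  | _ :: L, .const A => residual S L (S.defn A)
  | _, _ => none

theorem exists_residual_eq_of_step {p q : Proc Act Const} {l : Label Act} (h : Step S p l q) :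
    ∃ L, residual S L p = some q := by
  induction h with
  | one | preAct | preTau => exact ⟨[], rfl⟩
  | @sum _ i _ _ _ hf _ ih =>
    obtain ⟨L, hL⟩ := ih
    exact ⟨i :: L, by simp [residual, hf, hL]⟩
  | const _ ih =>
    obtain ⟨L, hL⟩ := ih
    exact ⟨0 :: L, hL⟩

theorem countable_setOf_step (p : Proc Act Const) : {q | ∃ l, Step S p l q}.Countable :=
  ((Set.countable_range fun L => residual S L p).preimage (Option.some_injective _)).mono
    fun _ ⟨_, h⟩ => exists_residual_eq_of_step h

theorem UWeak.reflTransGen {r q : Proc Act Const} {s : List Act} (h : UWeak S r s q) :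
    ReflTransGen (fun a b => ∃ l, Step S a l b) r q := by
  induction h with
  | refl => exact .refl
  | tau _ hstep _ ih | act _ hstep _ ih => exact .head ⟨_, hstep⟩ ih

theorem countable_afterU (r : Proc Act Const) (s : List Act) : (afterU S r s).Countable :=
  (countable_setOf_reflTransGen countable_setOf_step r).mono fun _ => UWeak.reflTransGen

theorem UWeak.not_canOk_right {r q : Proc Act Const} {s : List Act} (h : UWeak S r s q) :
    ¬ CanOk S q := by
  induction h with
  | refl h => exact h
  | tau _ _ _ ih | act _ _ _ ih => exact ih

theorem UWeak.exists_of_cons {r q : Proc Act Const} {a : Act} {s : List Act}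
    (h : UWeak S r (a :: s) q) :
    ∃ r₀ r₁, UWeak S r [] r₀ ∧ Step S r₀ (.act a) r₁ ∧ UWeak S r₁ s q := by
  generalize hs : a :: s = t at h
  induction h with
  | refl => cases hs
  | tau hok hstep _ ih =>
    obtain ⟨r₀, r₁, h₀, h₁, h₂⟩ := ih hs
    exact ⟨r₀, r₁, .tau hok hstep h₀, h₁, h₂⟩
  | act hok hstep h ih =>
    cases hs
    exact ⟨_, _, .refl hok, hstep, h⟩

theorem Weak.exists_of_cons {p q : Proc Act Const} {a : Act} {s : List Act}
    (h : Weak S p (a :: s) q) :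
    ∃ p₀ p₁, Weak S p [] p₀ ∧ Step S p₀ (.act a) p₁ ∧ Weak S p₁ s q := by
  generalize hs : a :: s = t at h
  induction h with
  | refl => cases hs
  | tau hstep _ ih =>
    obtain ⟨p₀, p₁, h₀, h₁, h₂⟩ := ih hs
    exact ⟨p₀, p₁, .tau hstep h₀, h₁, h₂⟩
  | act hstep h ih =>
    cases hs
    exact ⟨_, _, .refl _, hstep, h⟩

theorem Must.exists_canOk_of_maxComp {ρ : ℕ → Proc Act Const × Proc Act Const}
    (hρ : MaxComp S ρ) {k : ℕ} (hM : Must S (ρ k).1 (ρ k).2) : ∃ j, CanOk S (ρ j).2 := by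
  obtain ⟨i, hi⟩ := hM (fun i => ρ (k + i)) rfl fun i => hρ (k + i)
  exact ⟨k + i, hi⟩

theorem Must.of_parTau {p r p' r' : Proc Act Const} (hM : Must S p r)
    (h : ParTau S (p, r) (p', r')) (hr : CanOk S r → CanOk S r') : Must S p' r' := by
  intro ρ hρ₀ hρ
  obtain ⟨_ | k, hk⟩ := hM (fun k => Nat.casesOn k (p, r) ρ) rfl
    (fun | 0 => .inl (by rw [← hρ₀] at h; exact h) | k + 1 => hρ k)
  · exact ⟨0, hρ₀ ▸ hr hk⟩
  · exact ⟨k, hk⟩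

theorem Must.of_step_left {p p' r : Proc Act Const} (hM : Must S p r)
    (h : Step S p .tau p') : Must S p' r :=
  hM.of_parTau (.left h) id

theorem Must.of_weak_nil_left {p p' r : Proc Act Const} (hM : Must S p r)
    (h : Weak S p [] p') : Must S p' r := by
  generalize hs : ([] : List Act) = s at h
  induction h with
  | refl => exact hM
  | tau hstep _ ih => exact ih (hM.of_step_left hstep) hs
  | act => cases hs

theorem Must.of_uweak_nil_right {p r r' : Proc Act Const} (hM : Must S p r)
    (h : UWeak S r [] r') : Must S p r' := by
  generalize hs : ([] : List Act) = s at h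
  induction h with
  | refl => exact hM
  | tau hok hstep _ ih => exact ih (hM.of_parTau (.right hstep) (absurd · hok)) hs
  | act => cases hs

/-- `Must` survives every step of the synchronisation because the client, moving along an
unsuccessful trace, never succeeds. -/
theorem Must.of_sync_uweak {p p₀ p₁ r x : Proc Act Const} {a : Act} (hM : Must S p r)
    (hp₀ : Weak S p [] p₀) (hp₁ : Step S p₀ (.act (S.co a)) p₁) (hx : UWeak S r [a] x) :
    Must S p₁ x := by
  obtain ⟨r₀, r₁, hr₀, hr₁, hx'⟩ := hx.exists_of_cons
  have hM₀ : Must S p₀ r₀ := (hM.of_weak_nil_left hp₀).of_uweak_nil_right hr₀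
  have hsync : ParTau S (p₀, r₀) (p₁, r₁) := .sync hp₁ (by rwa [S.co_invol])
  exact (hM₀.of_parTau hsync (absurd · hr₀.not_canOk_right)).of_uweak_nil_right hx'

theorem tau_and_mem_of_step_bigOplus {X : Set (Proc Act Const)} {l : Label Act} {q : Proc Act Const}
    (h : Step S (bigOplus X) l q) : l = .tau ∧ q ∈ X := by
  unfold bigOplus at h
  split_ifs at h with hX
  · cases h with
    | sum hi hstep =>
      cases hi
      cases hstep
      exact ⟨rfl, hX.choose_spec.subset (Set.mem_range_self _)⟩
  · cases h
    contradiction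

theorem step_bigOplus_iff {X : Set (Proc Act Const)} (hX : X.Countable) {l : Label Act}
    {q : Proc Act Const} : Step S (bigOplus X) l q ↔ l = .tau ∧ q ∈ X := by
  refine ⟨tau_and_mem_of_step_bigOplus, ?_⟩
  rintro ⟨rfl, hq⟩
  obtain ⟨f, hfX⟩ := hX.exists_eq_range ⟨q, hq⟩
  have hf : ∃ f : ℕ → Proc Act Const, Set.range f = X := ⟨f, hfX.symm⟩
  rw [bigOplus, dif_pos hf]
  obtain ⟨n, hn⟩ := hf.choose_spec ▸ hq
  exact .sum (i := n) rfl (hn ▸ .preTau _)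

theorem parTau_bigOplus {X : Set (Proc Act Const)} {p : Proc Act Const}
    {t : Proc Act Const × Proc Act Const} (h : ParTau S (p, bigOplus X) t) :
    (∃ p', Step S p .tau p' ∧ t = (p', bigOplus X)) ∨ ∃ x ∈ X, t = (p, x) := by
  cases h with
  | left h => exact .inl ⟨_, h, rfl⟩
  | right h => exact .inr ⟨_, (tau_and_mem_of_step_bigOplus h).2, rfl⟩
  | sync _ h => cases (tau_and_mem_of_step_bigOplus h).1

/-- As long as the client `⊕X` has not moved, the server can only take τ-steps, each of which
preserves `Must` against every `x ∈ X`; once the client moves into `X`, the hypothesis applies.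
If it never moves, the server diverges, which an unsuccessful `x₀ ∈ X` rules out. -/
theorem must_bigOplus {X : Set (Proc Act Const)} (hX : X.Countable) {p x₀ : Proc Act Const}
    (hx₀ : x₀ ∈ X) (hx₀ok : ¬ CanOk S x₀) (hM : ∀ x ∈ X, Must S p x) :
    Must S p (bigOplus X) := by
  intro ρ hρ₀ hρ
  by_contra hno
  have hstep : ∀ j, (ρ j).2 = bigOplus X → (∀ x ∈ X, Must S (ρ j).1 x) →
      Step S (ρ j).1 .tau (ρ (j + 1)).1 ∧ (ρ (j + 1)).2 = bigOplus X := by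
    intro j hj hMj
    have hρj : ρ j = ((ρ j).1, bigOplus X) := Prod.ext rfl hj
    have hnotStuck : ¬ StateStuck S (ρ j) := fun hstuck =>
      hstuck ⟨((ρ j).1, x₀), hρj ▸ .right ((step_bigOplus_iff hX).2 ⟨rfl, hx₀⟩)⟩
    rcases parTau_bigOplus (hρj ▸ ((hρ j).resolve_right (hnotStuck ·.1))) with
      ⟨p', hp', heq⟩ | ⟨x, hx, heq⟩
    · rw [heq]
      exact ⟨hp', rfl⟩
    · have hMx : Must S (ρ (j + 1)).1 (ρ (j + 1)).2 := by rw [heq]; exact hMj x hx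
      exact absurd (Must.exists_canOk_of_maxComp hρ hMx) hno
  have hinv : ∀ j, (ρ j).2 = bigOplus X ∧ ∀ x ∈ X, Must S (ρ j).1 x := by
    intro j
    induction j with
    | zero => exact ⟨by rw [hρ₀], by rw [hρ₀]; exact hM⟩
    | succ j ih =>
      obtain ⟨hs, hc⟩ := hstep j ih.1 ih.2
      exact ⟨hc, fun x hx => (ih.2 x hx).of_step_left hs⟩
  obtain ⟨k, hk⟩ := hM x₀ hx₀ (fun k => ((ρ k).1, x₀)) (by rw [hρ₀])
    fun k => .inl (.left (hstep k (hinv k).1 (hinv k).2).1)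
  exact hx₀ok hk

end MTP

/-- Corollary 4.2: if `p Must r` and `p ⟹^s̄ q` then `r ⇓U s`. -/
theorem must_implies_usbU {Act Const : Type} (S : MTP.CCS Act Const)
    (p r q : MTP.Proc Act Const) (s : List Act)
    (hMust : MTP.Must S p r)
    (hWeak : MTP.Weak S p (s.map S.co) q) :
    MTP.usbU S r s := by
  induction s generalizing p r with
  | nil => exact ⟨p, hMust⟩
  | cons a s ih =>
    refine ⟨⟨p, hMust⟩, fun ⟨x₀, hx₀⟩ => ?_⟩
    obtain ⟨p₀, p₁, hp₀, hp₁, hrest⟩ := hWeak.exists_of_cons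
    have hM₁ : MTP.Must S p₁ (MTP.bigOplus (MTP.afterU S r [a])) :=
      MTP.must_bigOplus (MTP.countable_afterU r [a]) hx₀ hx₀.not_canOk_right
        fun _ hx => hMust.of_sync_uweak hp₀ hp₁ hx
    exact ih p₁ _ hM₁ hrest
end

section
/- Suppose p Must r and p ⟹^{s̄ā} q, where s ∈ Act*, a ∈ Act and overline denotes pointwise complementation. Then r ⟹̸✓^s r' --a--> r'' implies q Must r''. -/
section Aux

open MTP

variable {Act Const : Type} (S : MTP.CCS Act Const)

private lemma mtp_oneStep {p r p' r' : MTP.Proc Act Const}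
    (hM : MTP.Must S p r) (hstep : MTP.ParTau S (p, r) (p', r'))
    (hside : ¬ MTP.CanOk S r ∨ r = r') : MTP.Must S p' r' := by
  intro ρ h0 hmax
  have hmax' : MTP.MaxComp S (fun k => match k with | 0 => (p, r) | k+1 => ρ k) := by
    intro k
    match k with
    | 0 => left; simpa [h0] using hstep
    | k+1 => exact hmax k
  obtain ⟨k, hk⟩ := hM (fun k => match k with | 0 => (p, r) | k+1 => ρ k) rfl hmax'
  match k with
  | 0 =>
    rcases hside with h | h
    · exact absurd hk h
    · exact ⟨0, by rw [h0]; simpa [h] using hk⟩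
  | k+1 => exact ⟨k, hk⟩

private lemma mtp_tauClose {p q : MTP.Proc Act Const} {t : List Act}
    (h : MTP.Weak S p t q) (ht : t = []) :
    ∀ {r}, MTP.Must S p r → MTP.Must S q r := by
  induction h with
  | refl => exact fun h => h
  | tau hstep _ ih =>
    intro r hM
    exact ih ht (mtp_oneStep S hM (.left hstep) (Or.inr rfl))
  | act => simp at ht

private lemma mtp_firstAct {p q : MTP.Proc Act Const} {t : List Act}
    (h : MTP.Weak S p t q) :
    ∀ {b : Act} {t' : List Act}, t = b :: t' →
    ∀ {r r₀ : MTP.Proc Act Const}, MTP.Must S p r → ¬ MTP.CanOk S r →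
      MTP.Step S r (.act (S.co b)) r₀ →
      ∃ p', MTP.Must S p' r₀ ∧ MTP.Weak S p' t' q := by
  induction h with
  | refl => intro b t' hbt; simp at hbt
  | tau hstep _ ih =>
    intro b t' hbt r r₀ hM hno hr
    exact ih hbt (mtp_oneStep S hM (.left hstep) (Or.inl hno)) hno hr
  | act hstep hw ih =>
    intro b t' hbt r r₀ hM hno hr
    obtain ⟨rfl, rfl⟩ : _ ∧ _ := by
      constructor
      · exact (List.cons.injEq _ _ _ _ ▸ hbt).1
      · exact (List.cons.injEq _ _ _ _ ▸ hbt).2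
    exact ⟨_, mtp_oneStep S hM (.sync hstep hr) (Or.inl hno), hw⟩

private lemma mtp_main {a : Act} {r'' : MTP.Proc Act Const} :
    ∀ {s : List Act} {r r' : MTP.Proc Act Const}, MTP.UWeak S r s r' →
      MTP.Step S r' (.act a) r'' →
      ∀ {p q : MTP.Proc Act Const}, MTP.Must S p r →
        MTP.Weak S p ((s ++ [a]).map S.co) q → MTP.Must S q r'' := by
  intro s r r' hU
  induction hU with
  | @refl r hno =>
    intro hstep p q hM hW
    have hr : MTP.Step S r (.act (S.co (S.co a))) r'' := by
      rw [S.co_invol]; exact hstep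
    obtain ⟨p', hM', hW'⟩ := mtp_firstAct S hW rfl hM hno hr
    exact mtp_tauClose S hW' rfl hM'
  | tau hno hstep _ ih =>
    intro hstep' p q hM hW
    exact ih hstep' (mtp_oneStep S hM (.right hstep) (Or.inl hno)) hW
  | @act r r₀ r' b s' hno hstep _ ih =>
    intro hstep' p q hM hW
    have hr : MTP.Step S r (.act (S.co (S.co b))) r₀ := by
      rw [S.co_invol]; exact hstep
    obtain ⟨p', hM', hW'⟩ := mtp_firstAct S hW rfl hM hno hr
    exact ih hstep' hM' hW'

end Aux

/-- Proposition 4.3: if `p Must r` and `p ⟹^{s̄ā} q` then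
`r ⟹̸✓^s r' --a--> r''` implies `q Must r''`. -/
theorem must_unsuccessful_residual_step {Act Const : Type} (S : MTP.CCS Act Const)
    (p r q r' r'' : MTP.Proc Act Const) (s : List Act) (a : Act)
    (hMust : MTP.Must S p r)
    (hWeak : MTP.Weak S p ((s ++ [a]).map S.co) q)
    (hU : MTP.UWeak S r s r')
    (hStep : MTP.Step S r' (.act a) r'') :
    MTP.Must S q r'' := by
  exact mtp_main S hU hStep hMust hWeak
end

section
/- Suppose p Must r, p ⟹^{s̄ā} q, and r ⟹^s r' --a--> r'', where s ∈ Act*, a ∈ Act and overline denotes pointwise complementation. Then a ∈ uaU(r,s), i.e. a is a usable action of the client r after the trace s. -/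
namespace MTP

section Aux

variable {Act Const : Type}

/-! ### Countability of residual sets -/

/-- Decode a step derivation from a path of sum-indices. -/
def decode (S : CCS Act Const) : List ℕ → Proc Act Const → Option (Label Act × Proc Act Const)
  | [], .one => some (.ok, .nil)
  | [], .pre (some a) p => some (.act a, p)
  | [], .pre none p => some (.tau, p)
  | _ :: is, .const A => decode S is (S.defn A)
  | i :: is, .sum f => (f i).bind (fun p => decode S is p)
  | _, _ => none

lemma decode_of_step {S : CCS Act Const} {p : Proc Act Const} {l : Label Act}
    {q : Proc Act Const} (h : Step S p l q) : ∃ is, decode S is p = some (l, q) := by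
  induction h with
  | one => exact ⟨[], rfl⟩
  | preAct a p => exact ⟨[], rfl⟩
  | preTau p => exact ⟨[], rfl⟩
  | @sum f i p q l hf _ ih =>
    obtain ⟨is, his⟩ := ih
    exact ⟨i :: is, by simp [decode, hf, his]⟩
  | const _ ih =>
    obtain ⟨is, his⟩ := ih
    exact ⟨0 :: is, by simpa [decode] using his⟩

/-- Run several decoded steps. -/
def run (S : CCS Act Const) : List (List ℕ) → Proc Act Const → Option (Proc Act Const)
  | [], p => some p
  | is :: L, p => (decode S is p).bind (fun lq => run S L lq.2)

lemma run_of_uweak {S : CCS Act Const} {r : Proc Act Const} {s : List Act}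
    {x : Proc Act Const} (h : UWeak S r s x) : ∃ L, run S L r = some x := by
  induction h with
  | refl _ => exact ⟨[], rfl⟩
  | tau _ hst _ ih =>
    obtain ⟨is, his⟩ := decode_of_step hst
    obtain ⟨L, hL⟩ := ih
    exact ⟨is :: L, by simp [run, his, hL]⟩
  | act _ hst _ ih =>
    obtain ⟨is, his⟩ := decode_of_step hst
    obtain ⟨L, hL⟩ := ih
    exact ⟨is :: L, by simp [run, his, hL]⟩

lemma afterU_countable (S : CCS Act Const) (r : Proc Act Const) (s : List Act) :
    (afterU S r s).Countable := by
  have hsub : afterU S r s ⊆ Option.some ⁻¹' Set.range (fun L => run S L r) := by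
    intro x hx
    obtain ⟨L, hL⟩ := run_of_uweak hx
    exact ⟨L, hL⟩
  exact ((Set.countable_range _).preimage (Option.some_injective _)).mono hsub

/-! ### `bigOplus` facts -/

lemma bigOplus_step {S : CCS Act Const} {X : Set (Proc Act Const)}
    (h : ∃ f : ℕ → Proc Act Const, Set.range f = X) {l : Label Act} {q : Proc Act Const}
    (hs : Step S (bigOplus X) l q) : l = .tau ∧ q ∈ X := by
  rw [bigOplus, dif_pos h] at hs
  cases hs with
  | sum hf hstep =>
    rename_i i _
    have hp := (Option.some_injective _ hf)
    rw [← hp] at hstep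
    cases hstep
    refine ⟨rfl, ?_⟩
    have hm : h.choose i ∈ Set.range h.choose := ⟨i, rfl⟩
    rwa [h.choose_spec] at hm

lemma bigOplus_tau {S : CCS Act Const} {X : Set (Proc Act Const)}
    (h : ∃ f : ℕ → Proc Act Const, Set.range f = X) {x : Proc Act Const} (hx : x ∈ X) :
    Step S (bigOplus X) .tau x := by
  rw [bigOplus, dif_pos h]
  have hx' : ∃ n, h.choose n = x := by
    rw [← h.choose_spec] at hx; exact hx
  obtain ⟨n, hn⟩ := hx'
  exact Step.sum (i := n) rfl (hn ▸ Step.preTau _)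

/-! ### Unsuccessful computations machinery -/

lemma uweak_not_canOk_src {S : CCS Act Const} {r : Proc Act Const} {s : List Act}
    {x : Proc Act Const} (h : UWeak S r s x) : ¬ CanOk S r := by
  cases h <;> assumption

lemma uweak_not_canOk_tgt {S : CCS Act Const} {r : Proc Act Const} {s : List Act}
    {x : Proc Act Const} (h : UWeak S r s x) : ¬ CanOk S x := by
  induction h <;> assumption

/-- An unsuccessful-on-the-client τ-path of the parallel composition. -/
inductive PathU (S : CCS Act Const) :
    Proc Act Const × Proc Act Const → Proc Act Const × Proc Act Const → Prop
  | refl (st) : PathU S st st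
  | cons {st st' st''} : ¬ CanOk S st.2 → ParTau S st st' → PathU S st' st'' → PathU S st st''

lemma PathU.trans {S : CCS Act Const} {st st' st'' : Proc Act Const × Proc Act Const}
    (h : PathU S st st') (h' : PathU S st' st'') : PathU S st st'' := by
  induction h with
  | refl => exact h'
  | cons hok hstep _ ih => exact .cons hok hstep (ih h')

def MustSt (S : CCS Act Const) (st : Proc Act Const × Proc Act Const) : Prop :=
  ∀ ρ : ℕ → Proc Act Const × Proc Act Const,
    ρ 0 = st → MaxComp S ρ → ∃ k, CanOk S (ρ k).2

lemma must_iff_mustSt {S : CCS Act Const} {p r : Proc Act Const} :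
    Must S p r ↔ MustSt S (p, r) := Iff.rfl

lemma mustSt_step {S : CCS Act Const} {st st' : Proc Act Const × Proc Act Const}
    (h : MustSt S st) (hok : ¬ CanOk S st.2) (hstep : ParTau S st st') : MustSt S st' := by
  intro ρ h0 hmax
  have hmax' : MaxComp S (fun n => Nat.rec st (fun n _ => ρ n) n) := by
    intro k
    cases k with
    | zero => exact Or.inl (by simpa [h0] using hstep)
    | succ k => exact hmax k
  obtain ⟨k, hk⟩ := h _ rfl hmax'
  cases k with
  | zero => exact absurd hk hok
  | succ k => exact ⟨k, hk⟩

lemma mustSt_path {S : CCS Act Const} {st st' : Proc Act Const × Proc Act Const}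
    (hp : PathU S st st') (h : MustSt S st) : MustSt S st' := by
  induction hp with
  | refl => exact h
  | cons hok hstep _ ih => exact ih (mustSt_step h hok hstep)

lemma maxComp_shift {S : CCS Act Const} {ρ : ℕ → Proc Act Const × Proc Act Const}
    (h : MaxComp S ρ) (n : ℕ) : MaxComp S (fun j => ρ (n + j)) := by
  intro k
  exact h (n + k)

/-! ### Building parallel paths from weak transitions -/

lemma weak_nil_path {S : CCS Act Const} {x : Proc Act Const} (hx : ¬ CanOk S x) :
    ∀ {p s p'}, Weak S p s p' → s = [] → PathU S (p, x) (p', x) := by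
  intro p s p' h
  induction h with
  | refl _ => exact fun _ => .refl _
  | tau hst _ ih => exact fun hs => .cons hx (ParTau.left hst) (ih hs)
  | act _ _ _ => intro hs; simp at hs

lemma uweak_nil_path {S : CCS Act Const} :
    ∀ {r s x}, UWeak S r s x → s = [] → ∀ p, PathU S (p, r) (p, x) := by
  intro r s x h
  induction h with
  | refl _ => exact fun _ _ => .refl _
  | tau hok hst _ ih => exact fun hs p => .cons hok (ParTau.right hst) (ih hs p)
  | act _ _ _ _ => intro hs; simp at hs

lemma sync_path_aux {S : CCS Act Const} {p p₁ p' : Proc Act Const} {c : Act}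
    (hs1 : Step S p (.act c) p₁) (hp' : Weak S p₁ [] p') :
    ∀ {r s x}, UWeak S r s x → s = [S.co c] → PathU S (p, r) (p', x) := by
  intro r s x h
  induction h with
  | refl _ => intro hs; simp at hs
  | tau hok hst _ ih => exact fun hs => .cons hok (ParTau.right hst) (ih hs)
  | act hok hst hw ih =>
    intro hs
    rename_i r r₁ x' a s₀
    obtain ⟨rfl, rfl⟩ : a = S.co c ∧ s₀ = [] := by simpa using hs
    refine .cons hok (ParTau.sync hs1 hst) ?_
    exact (uweak_nil_path hw rfl p₁).trans (weak_nil_path (uweak_not_canOk_tgt hw) hp' rfl)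

lemma sync_path {S : CCS Act Const} {c : Act} {r x : Proc Act Const}
    (hr : UWeak S r [S.co c] x) :
    ∀ {p s p'}, Weak S p s p' → s = [c] → PathU S (p, r) (p', x) := by
  intro p s p' h
  induction h with
  | refl _ => intro hs; simp at hs
  | tau hst _ ih => exact fun hs => .cons (uweak_not_canOk_src hr) (ParTau.left hst) (ih hs)
  | act hst hw ih =>
    intro hs
    rename_i p₀ p₁ p'' a s₀
    obtain ⟨rfl, rfl⟩ : a = c ∧ s₀ = [] := by simpa using hs
    exact sync_path_aux hst hw hr rfl

lemma chain_path {S : CCS Act Const} {x : Proc Act Const} (hx : ¬ CanOk S x)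
    (q : ℕ → Proc Act Const) :
    ∀ k, (∀ j < k, Step S (q j) .tau (q (j + 1))) → PathU S (q 0, x) (q k, x) := by
  intro k
  induction k with
  | zero => exact fun _ => .refl _
  | succ k ih =>
    intro h
    exact (ih fun j hj => h j (hj.trans (Nat.lt_succ_self k))).trans
      (.cons hx (ParTau.left (h k (Nat.lt_succ_self k))) (.refl _))

lemma parTau_inv {S : CCS Act Const} {st st' : Proc Act Const × Proc Act Const}
    (h : ParTau S st st') :
    (Step S st.1 .tau st'.1 ∧ st'.2 = st.2) ∨
    (Step S st.2 .tau st'.2 ∧ st'.1 = st.1) ∨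
    (∃ a, Step S st.1 (.act a) st'.1 ∧ Step S st.2 (.act (S.co a)) st'.2) := by
  cases h with
  | left h => exact Or.inl ⟨h, rfl⟩
  | right h => exact Or.inr (Or.inl ⟨h, rfl⟩)
  | sync h1 h2 => exact Or.inr (Or.inr ⟨_, h1, h2⟩)

/-! ### The key lemma -/

lemma mustA {S : CCS Act Const} {p r p' x₀ : Proc Act Const} {b : Act}
    (hM : Must S p r) (hp : Weak S p [S.co b] p') (hx₀ : UWeak S r [b] x₀) :
    Must S p' (bigOplus (afterU S r [b])) := by
  classical
  set X : Set (Proc Act Const) := afterU S r [b] with hX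
  have hXc : X.Countable := afterU_countable S r [b]
  have hrepr : ∃ f : ℕ → Proc Act Const, Set.range f = X := by
    obtain ⟨f, hf⟩ := hXc.exists_eq_range ⟨x₀, hx₀⟩
    exact ⟨f, hf.symm⟩
  have hco : UWeak S r [S.co (S.co b)] x₀ := by rw [S.co_invol]; exact hx₀
  have hMst : MustSt S (p, r) := hM
  intro ρ h0 hmax
  by_contra hno
  push_neg at hno
  -- `L k` : step `k` is a left step.
  set L : ℕ → Prop := fun k => (ρ (k + 1)).2 = (ρ k).2 ∧ Step S (ρ k).1 .tau (ρ (k + 1)).1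
    with hLdef
  by_cases hall : ∀ k, L k
  · -- all steps left: infinite computation with client `x₀`
    have hpath : PathU S (p, r) (p', x₀) := sync_path hco hp rfl
    have hM' := mustSt_path hpath hMst
    obtain ⟨j, hj⟩ := hM' (fun j => ((ρ j).1, x₀)) (by simp [h0])
      (fun k => Or.inl (ParTau.left (hall k).2))
    exact uweak_not_canOk_tgt hx₀ hj
  · obtain hkex := not_forall.mp hall
    set k := Nat.find hkex with hkdef
    have hk : ¬ L k := Nat.find_spec hkex
    have hjlt : ∀ j < k, L j := fun j hj => not_not.mp (Nat.find_min hkex hj)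
    have hsec : ∀ j, j ≤ k → (ρ j).2 = bigOplus X := by
      intro j
      induction j with
      | zero => intro _; simp [h0]
      | succ j ih =>
        intro hj
        rw [(hjlt j (Nat.lt_of_succ_le hj)).1]
        exact ih (Nat.le_of_succ_le hj)
    have h2 : (ρ k).2 = bigOplus X := hsec k le_rfl
    have hreal : ParTau S (ρ k) (ρ (k + 1)) := by
      rcases hmax k with h | ⟨hs, _⟩
      · exact h
      · exfalso
        refine hs ⟨((ρ k).1, x₀), ?_⟩
        have : ParTau S ((ρ k).1, (ρ k).2) ((ρ k).1, x₀) := by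
          rw [h2]; exact ParTau.right (bigOplus_tau hrepr hx₀)
        exact this
    rcases parTau_inv hreal with ⟨hst, heq⟩ | ⟨hst, heq⟩ | ⟨a, _, hst⟩
    · exact hk ⟨heq, hst⟩
    · -- right step from `bigOplus X` to some `x ∈ X`
      rw [h2] at hst
      have hx : (ρ (k + 1)).2 ∈ X := (bigOplus_step hrepr hst).2
      have hxU : UWeak S r [b] (ρ (k + 1)).2 := hx
      have hxco : UWeak S r [S.co (S.co b)] (ρ (k + 1)).2 := by rw [S.co_invol]; exact hxU
      have hnok : ¬ CanOk S (ρ (k + 1)).2 := uweak_not_canOk_tgt hxU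
      have hpath1 : PathU S (p, r) (p', (ρ (k + 1)).2) := sync_path hxco hp rfl
      have hpath2 : PathU S ((ρ 0).1, (ρ (k + 1)).2) ((ρ k).1, (ρ (k + 1)).2) :=
        chain_path hnok (fun j => (ρ j).1) k (fun j hj => (hjlt j hj).2)
      have h01 : (ρ 0).1 = p' := by simp [h0]
      rw [h01] at hpath2
      have hfull : PathU S (p, r) (ρ (k + 1)) := by
        have : ρ (k + 1) = ((ρ k).1, (ρ (k + 1)).2) := by
          rw [← heq]
        exact this ▸ (hpath1.trans hpath2)
      have hM' := mustSt_path hfull hMst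
      obtain ⟨j, hj⟩ := hM' (fun j => ρ (k + 1 + j)) (by simp) (maxComp_shift hmax (k + 1))
      exact hno (k + 1 + j) hj
    · rw [h2] at hst
      have := (bigOplus_step hrepr hst).1
      cases this

/-! ### Splitting weak transitions -/

lemma weak_split {S : CCS Act Const} :
    ∀ {p s q}, Weak S p s q → ∀ {c t}, s = c :: t →
      ∃ p', Weak S p [c] p' ∧ Weak S p' t q := by
  intro p s q h
  induction h with
  | refl _ => intro c t hs; simp at hs
  | tau hst _ ih =>
    intro c t hs
    obtain ⟨p', h1, h2⟩ := ih hs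
    exact ⟨p', .tau hst h1, h2⟩
  | @act p₀ p₁ q' a s₀ hst hw _ =>
    intro c t hs
    obtain ⟨rfl, rfl⟩ : a = c ∧ s₀ = t := by simpa using hs
    exact ⟨p₁, .act hst (.refl _), hw⟩

lemma main_usbU {S : CCS Act Const} :
    ∀ (t : List Act) (p r q : Proc Act Const),
      Must S p r → Weak S p (t.map S.co) q → usbU S r t := by
  intro t
  induction t with
  | nil => exact fun p r q hM _ => ⟨p, hM⟩
  | cons b t ih =>
    intro p r q hM hW
    refine ⟨⟨p, hM⟩, fun hex => ?_⟩
    obtain ⟨x, hx⟩ := hex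
    obtain ⟨p', h1, h2⟩ := weak_split hW (c := S.co b) (t := t.map S.co) (by simp)
    exact ih p' _ q (mustA hM h1 hx) h2

end Aux

end MTP


/-- Corollary 4.4: if `p Must r`, `p ⟹^{s̄ā} q` and `r ⟹^s r' --a--> r''`,
then `a` is a usable action of the client `r` after `s`. -/
theorem usable_action_of_client {Act Const : Type} (S : MTP.CCS Act Const)
    (p r q r' r'' : MTP.Proc Act Const) (s : List Act) (a : Act)
    (hMust : MTP.Must S p r)
    (hWeak : MTP.Weak S p ((s ++ [a]).map S.co) q)
    (hW : MTP.Weak S r s r')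
    (hStep : MTP.Step S r' (.act a) r'') :
    a ∈ MTP.uaU S r s := by
  intro _hex
  exact MTP.main_usbU (s ++ [a]) p r q hMust hWeak
end

section
/- If r ∈ U_clt and r diverges (there exists an infinite sequence of τ-transitions from r), then for every infinite reduction sequence r = r₀ --τ--> r₁ --τ--> r₂ --τ--> ⋯ there exists n ∈ ℕ such that r_n has a ✓-transition. -/
/-- Lemma 4.5: a usable divergent client can report success along every
infinite reduction sequence. -/
theorem usable_divergent_client_succeeds {Act Const : Type} (S : MTP.CCS Act Const)
    (r : MTP.Proc Act Const)
    (hUsable : r ∈ MTP.Uclt S)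
    (hDiv : ¬ MTP.Conv S r) :
    ∀ ρ : ℕ → MTP.Proc Act Const,
      ρ 0 = r → (∀ k, MTP.Step S (ρ k) .tau (ρ (k + 1))) →
      ∃ n, MTP.CanOk S (ρ n) := by
  intro ρ h0 hstep
  obtain ⟨p, hMust⟩ := hUsable
  have := hMust (fun k => (p, ρ k)) (by simp [h0])
    (fun k => Or.inl (MTP.ParTau.right (hstep k)))
  exact this
end

section
/- Suppose r ∈ U_clt. Then 0 does not Must r if and only if there exists r' such that r ⟹̸✓^ε r' and r' has no τ-transition. -/
namespace MTP

variable {Act Const : Type} {S : CCS Act Const}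

lemma nil_no_step {l : Label Act} {q : Proc Act Const} (h : Step S Proc.nil l q) : False := by
  rw [Proc.nil] at h
  cases h with
  | sum hf _ => simp at hf

lemma partau_nil {x : Proc Act Const} {t} (h : ParTau S (Proc.nil, x) t) :
    ∃ x', t = (Proc.nil, x') ∧ Step S x .tau x' := by
  cases h with
  | left h => exact (nil_no_step h).elim
  | right h => exact ⟨_, rfl, h⟩
  | sync h _ => exact (nil_no_step h).elim

lemma uweak_snoc : ∀ {s : List Act} {p q : Proc Act Const}, UWeak S p s q → s = [] →
    ∀ q', Step S q .tau q' → ¬ CanOk S q' → UWeak S p [] q' := by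
  intro s p q h
  induction h with
  | refl hp => intro _ q' hs hok; exact .tau hp hs (.refl hok)
  | tau hp hs _ ih => intro he q' h1 h2; exact .tau hp hs (ih he q' h1 h2)
  | act _ _ _ _ => intro he; simp at he

lemma exists_bad : ∀ {s : List Act} {r r' : Proc Act Const}, UWeak S r s r' → s = [] →
    Stable S r' →
    ∃ ρ : ℕ → Proc Act Const × Proc Act Const,
      ρ 0 = (Proc.nil, r) ∧ MaxComp S ρ ∧ ∀ k, ¬ CanOk S (ρ k).2 := by
  intro s r r' h
  induction h with
  | @refl p hp =>
    intro _ hst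
    refine ⟨fun _ => (Proc.nil, p), rfl, ?_, fun _ => hp⟩
    intro k
    right
    refine ⟨?_, rfl⟩
    rintro ⟨t, ht⟩
    obtain ⟨x', -, hstep⟩ := partau_nil ht
    exact hst ⟨x', hstep⟩
  | @tau p p' q s hp hs _ ih =>
    intro he hst
    obtain ⟨ρ, h0, hmax, hok⟩ := ih he hst
    refine ⟨fun k => Nat.casesOn k (Proc.nil, p) ρ, rfl, ?_, ?_⟩
    · intro k
      cases k with
      | zero =>
        left
        show ParTau S (Proc.nil, p) (ρ 0)
        rw [h0]
        exact ParTau.right hs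
      | succ k => exact hmax k
    · intro k
      cases k with
      | zero => exact hp
      | succ k => exact hok k
  | act _ _ _ _ => intro he; simp at he

end MTP

/-- Lemma 4.7: for a usable client `r`, `0` does not Must `r` iff `r` can reach a
stable state by an unsuccessful sequence of internal moves. -/
theorem nil_not_must_iff {Act Const : Type} (S : MTP.CCS Act Const)
    (r : MTP.Proc Act Const)
    (hUsable : r ∈ MTP.Uclt S) :
    ¬ MTP.Must S MTP.Proc.nil r ↔
      ∃ r', MTP.UWeak S r [] r' ∧ MTP.Stable S r' := by
  classical
  constructor
  · intro hnm
    unfold MTP.Must at hnm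
    push_neg at hnm
    obtain ⟨ρ, h0, hmax, hok⟩ := hnm
    have hfst : ∀ k, ρ k = (MTP.Proc.nil, (ρ k).2) := by
      intro k
      induction k with
      | zero => rw [h0]
      | succ k ih =>
        rcases hmax k with h | ⟨_, he⟩
        · rw [ih] at h
          obtain ⟨x', ht, -⟩ := MTP.partau_nil h
          rw [ht]
        · rw [he, ih]
    by_cases hstuck : ∃ k, MTP.StateStuck S (ρ k)
    · set k := Nat.find hstuck with hkdef
      have hk : MTP.StateStuck S (ρ k) := Nat.find_spec hstuck
      have hlt : ∀ j, j < k → ¬ MTP.StateStuck S (ρ j) := fun j hj => Nat.find_min hstuck hj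
      have huw : ∀ n, n ≤ k → MTP.UWeak S r [] (ρ n).2 := by
        intro n hn
        induction n with
        | zero =>
          have : (ρ 0).2 = r := by rw [h0]
          rw [this]
          exact .refl (by have := hok 0; rw [h0] at this; exact this)
        | succ n ih =>
          have hn' : n < k := hn
          rcases hmax n with h | ⟨hs, -⟩
          · rw [hfst n] at h
            obtain ⟨x', ht, hstep⟩ := MTP.partau_nil h
            have h2 : (ρ (n+1)).2 = x' := by rw [ht]
            rw [h2]
            exact MTP.uweak_snoc (ih hn'.le) rfl x' hstep (by rw [← h2]; exact hok (n+1))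
          · exact absurd hs (hlt n hn')
      refine ⟨(ρ k).2, huw k le_rfl, ?_⟩
      rintro ⟨q, hq⟩
      exact hk ⟨((ρ k).1, q), MTP.ParTau.right hq⟩
    · exfalso
      push_neg at hstuck
      have hstep : ∀ k, MTP.Step S (ρ k).2 .tau (ρ (k+1)).2 := by
        intro k
        rcases hmax k with h | ⟨hs, -⟩
        · rw [hfst k] at h
          obtain ⟨x', ht, hstepk⟩ := MTP.partau_nil h
          rw [ht]
          exact hstepk
        · exact absurd hs (hstuck k)
      obtain ⟨p, hp⟩ := hUsable
      obtain ⟨k, hk⟩ := hp (fun k => (p, (ρ k).2)) (by show (p, (ρ 0).2) = (p, r); rw [h0])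
        (fun k => Or.inl (MTP.ParTau.right (hstep k)))
      exact hok k hk
  · rintro ⟨r', huw, hst⟩ hm
    obtain ⟨ρ, h0, hmax, hok⟩ := MTP.exists_bad huw rfl hst
    obtain ⟨k, hk⟩ := hm ρ h0 hmax
    exact hok k hk
end

section
/- If r ∈ U_clt, then there exists a process p such that p Must r, p has no ✓-transition, and p has no τ-transition. -/
namespace MTP

variable {Act Const : Type}

/-- Syntactic reachability by descending through the term structure. -/
def reach (S : CCS Act Const) : Proc Act Const → List ℕ → Proc Act Const
  | p, [] => p
  | .one, _ :: w => reach S Proc.nil w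
  | .const A, _ :: w => reach S (S.defn A) w
  | .pre _ q, _ :: w => reach S q w
  | .sum f, n :: w => reach S ((f n).getD Proc.nil) w

theorem reach_append (S : CCS Act Const) (w₁ w₂ : List ℕ) (p : Proc Act Const) :
    reach S (reach S p w₁) w₂ = reach S p (w₁ ++ w₂) := by
  induction w₁ generalizing p with
  | nil => simp [reach]
  | cons n w ih => cases p <;> simp [reach, ih]

theorem step_reach {S : CCS Act Const} {p q : Proc Act Const} {l : Label Act}
    (h : Step S p l q) : ∃ w, reach S p w = q := by
  induction h with
  | one => exact ⟨[0], by simp [reach, Proc.nil]⟩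
  | preAct a p => exact ⟨[0], by simp [reach]⟩
  | preTau p => exact ⟨[0], by simp [reach]⟩
  | @sum f i p q l hf hs ih =>
      obtain ⟨w, hw⟩ := ih
      exact ⟨i :: w, by simp [reach, hf, hw]⟩
  | @const A l q hs ih =>
      obtain ⟨w, hw⟩ := ih
      exact ⟨0 :: w, by simp [reach, hw]⟩

theorem step_act_reach {S : CCS Act Const} {p q : Proc Act Const} {l : Label Act}
    (h : Step S p l q) : ∀ a : Act, l = .act a → ∃ w, reach S p w = .pre (some a) q := by
  induction h with
  | one => intro a ha; cases ha
  | preAct b p => intro a ha; cases ha; exact ⟨[], by simp [reach]⟩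
  | preTau p => intro a ha; cases ha
  | @sum f i p q l hf hs ih =>
      intro a ha
      obtain ⟨w, hw⟩ := ih a ha
      exact ⟨i :: w, by simp [reach, hf, hw]⟩
  | @const A l q hs ih =>
      intro a ha
      obtain ⟨w, hw⟩ := ih a ha
      exact ⟨0 :: w, by simp [reach, hw]⟩

theorem weak_nil_reach {S : CCS Act Const} {p q : Proc Act Const} {s : List Act}
    (h : Weak S p s q) : s = [] → ∃ w, reach S p w = q := by
  induction h with
  | refl p => intro _; exact ⟨[], by simp [reach]⟩
  | @tau p p' q s h1 h2 ih =>
      intro hs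
      obtain ⟨w, hw⟩ := ih hs
      obtain ⟨w₀, hw₀⟩ := step_reach h1
      exact ⟨w₀ ++ w, by rw [← reach_append, hw₀, hw]⟩
  | act h1 h2 ih => intro hs; cases hs

theorem weak_single_reach {S : CCS Act Const} {p q : Proc Act Const} {s : List Act}
    (h : Weak S p s q) :
    ∀ a : Act, s = [a] → ∃ w w' q₀, reach S p w = .pre (some a) q₀ ∧ reach S q₀ w' = q := by
  induction h with
  | refl p => intro a ha; cases ha
  | @tau p p' q s h1 h2 ih =>
      intro a ha
      obtain ⟨w, w', q₀, hw, hw'⟩ := ih a ha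
      obtain ⟨w₀, hw₀⟩ := step_reach h1
      exact ⟨w₀ ++ w, w', q₀, by rw [← reach_append, hw₀, hw], hw'⟩
  | @act p p' q b s h1 h2 ih =>
      intro a ha
      obtain ⟨rfl, hs⟩ : b = a ∧ s = [] := by
        injection ha with e1 e2; exact ⟨e1, e2⟩
      obtain ⟨w, hw⟩ := step_act_reach h1 _ rfl
      obtain ⟨w', hw'⟩ := weak_nil_reach h2 hs
      exact ⟨w, w', p', hw, hw'⟩

/-- The head action of a prefix term. -/
def headAct : Proc Act Const → Option Act
  | .pre (some a) _ => some a
  | _ => none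

/-- The body of a prefix term. -/
def headBody : Proc Act Const → Proc Act Const
  | .pre _ q => q
  | _ => Proc.nil

theorem headAct_eq_some {x : Proc Act Const} {a : Act} (h : headAct x = some a) :
    x = .pre (some a) (headBody x) := by
  cases x with
  | pre o q =>
      cases o with
      | none => cases h
      | some b => cases h; rfl
  | one => cases h
  | const A => cases h
  | sum f => cases h

open Classical in
/-- Candidate summands for the cool server. -/
noncomputable def cand (S : CCS Act Const) (p : Proc Act Const) (ww : List ℕ × List ℕ) :
    Option (Proc Act Const) :=
  (headAct (reach S p ww.1)).bind fun a =>
    if Weak S p [a] (reach S (headBody (reach S p ww.1)) ww.2) then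
      some (.pre (some a) (reach S (headBody (reach S p ww.1)) ww.2))
    else none

/-- The cool server associated to `p`. -/
noncomputable def pGood (S : CCS Act Const) (p : Proc Act Const) : Proc Act Const :=
  .sum fun n => cand S p (Denumerable.ofNat (List ℕ × List ℕ) n)

theorem cand_eq_some {S : CCS Act Const} {p pp : Proc Act Const} {ww : List ℕ × List ℕ}
    (h : cand S p ww = some pp) :
    ∃ a q, pp = .pre (some a) q ∧ Weak S p [a] q := by
  unfold cand at h
  cases hh : headAct (reach S p ww.1) with
  | none => rw [hh] at h; cases h
  | some a =>
      rw [hh] at h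
      simp only [Option.bind_some] at h
      split at h
      · exact ⟨a, _, (Option.some_inj.mp h).symm, by assumption⟩
      · cases h

theorem pGood_step {S : CCS Act Const} {p q : Proc Act Const} {l : Label Act}
    (h : Step S (pGood S p) l q) : ∃ a, l = .act a ∧ Weak S p [a] q := by
  cases h with
  | @sum f i pp q l hf hs =>
      obtain ⟨a, q', rfl, hw⟩ := cand_eq_some hf
      cases hs with
      | preAct => exact ⟨a, rfl, hw⟩

theorem pGood_step_of_weak {S : CCS Act Const} {p q : Proc Act Const} {a : Act}
    (h : Weak S p [a] q) : Step S (pGood S p) (.act a) q := by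
  classical
  obtain ⟨w, w', q₀, h1, h2⟩ := weak_single_reach h a rfl
  refine Step.sum (i := Encodable.encode ((w, w') : List ℕ × List ℕ))
    (p := .pre (some a) q) ?_ (Step.preAct a q)
  show cand S p (Denumerable.ofNat (List ℕ × List ℕ) _) = _
  rw [Denumerable.ofNat_encode]
  unfold cand
  have hb : headBody (reach S p (w, w').1) = q₀ := by
    show headBody (reach S p w) = q₀
    rw [h1]; rfl
  have ha : headAct (reach S p (w, w').1) = some a := by
    show headAct (reach S p w) = some a
    rw [h1]; rfl
  rw [ha, Option.bind_some, hb]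
  have h2' : reach S q₀ (w, w').2 = q := h2
  rw [h2', if_pos h]

theorem pGood_no_ok (S : CCS Act Const) (p : Proc Act Const) : ¬ CanOk S (pGood S p) := by
  rintro ⟨q, hq⟩
  obtain ⟨a, ha, -⟩ := pGood_step hq
  cases ha

theorem pGood_stable (S : CCS Act Const) (p : Proc Act Const) : Stable S (pGood S p) := by
  rintro ⟨q, hq⟩
  obtain ⟨a, ha, -⟩ := pGood_step hq
  cases ha

open Classical in
/-- A maximal τ-extension of `p`, stuttering once stable. -/
noncomputable def tauExt (S : CCS Act Const) (p : Proc Act Const) : ℕ → Proc Act Const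
  | 0 => p
  | k + 1 =>
      if h : ∃ q, Step S (tauExt S p k) .tau q then h.choose else tauExt S p k

theorem tauExt_spec (S : CCS Act Const) (p : Proc Act Const) (k : ℕ) :
    Step S (tauExt S p k) .tau (tauExt S p (k + 1)) ∨
      (Stable S (tauExt S p k) ∧ tauExt S p (k + 1) = tauExt S p k) := by
  rw [tauExt]
  split
  · next h => exact Or.inl h.choose_spec
  · next h => exact Or.inr ⟨h, rfl⟩

theorem weak_snoc_tau {S : CCS Act Const} {p m : Proc Act Const} {s : List Act}
    (h : Weak S p s m) : ∀ m', Step S m .tau m' → Weak S p s m' := by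
  induction h with
  | refl p => exact fun m' hs => .tau hs (.refl _)
  | tau h1 h2 ih => exact fun m' hs => .tau h1 (ih m' hs)
  | act h1 h2 ih => exact fun m' hs => .act h1 (ih m' hs)

theorem weak_snoc_act {S : CCS Act Const} {p m : Proc Act Const} {s : List Act}
    (h : Weak S p s m) : ∀ (x : Proc Act Const) (a : Act), Step S m (.act a) x →
      Weak S p (s ++ [a]) x := by
  induction h with
  | refl p => exact fun x a hs => .act hs (.refl _)
  | tau h1 h2 ih => exact fun x a hs => .tau h1 (ih x a hs)
  | act h1 h2 ih => exact fun x a hs => .act h1 (ih x a hs)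

theorem tauExt_weak (S : CCS Act Const) (p : Proc Act Const) (k : ℕ) :
    Weak S p [] (tauExt S p k) := by
  induction k with
  | zero => exact .refl p
  | succ k ih =>
      rcases tauExt_spec S p k with h | h
      · exact weak_snoc_tau ih _ h
      · rw [h.2]; exact ih

/-- A step of a composition whose current client cannot succeed. -/
def BStep (S : CCS Act Const) (s t : Proc Act Const × Proc Act Const) : Prop :=
  ParTau S s t ∧ ¬ CanOk S s.2

/-- Existence of a maximal computation that is never client-successful. -/
def BadRun (S : CCS Act Const) (s : Proc Act Const × Proc Act Const) : Prop :=
  ∃ σ : ℕ → Proc Act Const × Proc Act Const,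
    MaxComp S σ ∧ σ 0 = s ∧ ∀ k, ¬ CanOk S (σ k).2

theorem badRun_of_bstep {S : CCS Act Const} {s t : Proc Act Const × Proc Act Const}
    (h : BStep S s t) (hb : BadRun S t) : BadRun S s := by
  obtain ⟨σ, hm, h0, hbad⟩ := hb
  refine ⟨fun k => Nat.rec s (fun k _ => σ k) k, ?_, rfl, ?_⟩
  · intro k
    cases k with
    | zero => exact Or.inl (by simpa [h0] using h.1)
    | succ k => exact hm k
  · intro k
    cases k with
    | zero => exact h.2
    | succ k => exact hbad k

theorem badRun_of_rtg {S : CCS Act Const} {s t : Proc Act Const × Proc Act Const}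
    (h : Relation.ReflTransGen (BStep S) s t) (hb : BadRun S t) : BadRun S s := by
  induction h using Relation.ReflTransGen.head_induction_on with
  | refl => exact hb
  | head hstep _ ih => exact badRun_of_bstep hstep ih

theorem must_not_badRun {S : CCS Act Const} {p r : Proc Act Const} (h : Must S p r) :
    ¬ BadRun S (p, r) := by
  rintro ⟨σ, hm, h0, hbad⟩
  obtain ⟨k, hk⟩ := h σ h0 hm
  exact hbad k hk

theorem weak_nil_par {S : CCS Act Const} {p q rc : Proc Act Const} {s : List Act}
    (h : Weak S p s q) :
    s = [] → ¬ CanOk S rc → Relation.ReflTransGen (BStep S) (p, rc) (q, rc) := by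
  induction h with
  | refl p => intro _ _; exact .refl
  | @tau p p' q s h1 h2 ih =>
      intro hs hb
      exact .head ⟨ParTau.left h1, hb⟩ (ih hs hb)
  | act h1 h2 ih => intro hs _; cases hs

theorem weak_par {S : CCS Act Const} {p q : Proc Act Const} {s : List Act}
    (h : Weak S p s q) :
    ∀ (a : Act) (rc r'' : Proc Act Const), s = [a] → Step S rc (.act (S.co a)) r'' →
      ¬ CanOk S rc → ¬ CanOk S r'' →
      Relation.ReflTransGen (BStep S) (p, rc) (q, r'') := by
  induction h with
  | refl p => intro a rc r'' hs; cases hs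
  | @tau p p' q s h1 h2 ih =>
      intro a rc r'' hs hr hb hb'
      exact .head ⟨ParTau.left h1, hb⟩ (ih a rc r'' hs hr hb hb')
  | @act p p' q b s h1 h2 ih =>
      intro a rc r'' hs hr hb hb'
      obtain ⟨rfl, hs0⟩ : b = a ∧ s = [] := by
        injection hs with e1 e2; exact ⟨e1, e2⟩
      exact .head ⟨ParTau.sync h1 hr, hb⟩ (weak_nil_par h2 hs0 hb')

end MTP

/-- Lemma 5.1: every usable client is satisfied by a server which is stable and
cannot report success. -/
theorem exists_cool_server {Act Const : Type} (S : MTP.CCS Act Const)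
    (r : MTP.Proc Act Const)
    (hUsable : r ∈ MTP.Uclt S) :
    ∃ p : MTP.Proc Act Const,
      MTP.Must S p r ∧ ¬ MTP.CanOk S p ∧ MTP.Stable S p := by
  classical
  obtain ⟨p, hMust⟩ := hUsable
  refine ⟨MTP.pGood S p, ?_, MTP.pGood_no_ok S p, MTP.pGood_stable S p⟩
  intro ρ h0 hmax
  by_contra hno
  have hbad : ∀ k, ¬ MTP.CanOk S (ρ k).2 := fun k hk => hno ⟨k, hk⟩
  refine absurd ?_ (MTP.must_not_badRun hMust)
  by_cases hall : ∀ k, ∃ r', MTP.Step S (ρ k).2 .tau r' ∧ ρ (k + 1) = ((ρ k).1, r')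
  · -- the client does τ-steps forever
    refine ⟨fun k => (p, (ρ k).2), ?_, show (p, (ρ 0).2) = (p, r) by rw [h0], hbad⟩
    intro k
    obtain ⟨r', hs, he⟩ := hall k
    have h2 : (ρ (k + 1)).2 = r' := by rw [he]
    exact Or.inl (MTP.ParTau.right (h2 ▸ hs))
  · push_neg at hall
    have hex : ∃ k, ¬ ∃ r', MTP.Step S (ρ k).2 .tau r' ∧ ρ (k + 1) = ((ρ k).1, r') := by
      obtain ⟨k, hk⟩ := hall
      exact ⟨k, by push_neg; exact hk⟩
    set k₀ := Nat.find hex with hk₀def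
    have hnot : ¬ ∃ r', MTP.Step S (ρ k₀).2 .tau r' ∧ ρ (k₀ + 1) = ((ρ k₀).1, r') :=
      Nat.find_spec hex
    have hlt : ∀ j, j < k₀ → ∃ r', MTP.Step S (ρ j).2 .tau r' ∧ ρ (j + 1) = ((ρ j).1, r') :=
      fun j hj => not_not.mp (Nat.find_min hex hj)
    have hserver : ∀ j, j ≤ k₀ → (ρ j).1 = MTP.pGood S p := by
      intro j hj
      induction j with
      | zero => rw [h0]
      | succ j ih =>
          obtain ⟨r', hs, he⟩ := hlt j (Nat.lt_of_succ_le hj)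
          rw [he]
          exact ih (Nat.le_of_succ_le hj)
    have hpath : Relation.ReflTransGen (MTP.BStep S) (p, r) (p, (ρ k₀).2) := by
      have key : ∀ j, j ≤ k₀ →
          Relation.ReflTransGen (MTP.BStep S) (p, (ρ 0).2) (p, (ρ j).2) := by
        intro j hj
        induction j with
        | zero => exact .refl
        | succ j ih =>
            obtain ⟨r', hs, he⟩ := hlt j (Nat.lt_of_succ_le hj)
            have h2 : (ρ (j + 1)).2 = r' := by rw [he]
            exact (ih (Nat.le_of_succ_le hj)).tail ⟨MTP.ParTau.right (h2 ▸ hs), hbad j⟩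
      have h2 : (ρ 0).2 = r := by rw [h0]
      exact h2 ▸ key k₀ le_rfl
    rcases hmax k₀ with hstep | ⟨hstuck, -⟩
    · -- a real step happens at k₀; it must be a synchronisation
      generalize e1 : ρ k₀ = st at hstep
      generalize e2 : ρ (k₀ + 1) = st' at hstep
      obtain ⟨ps, rs⟩ := st
      have hps : ps = MTP.pGood S p := by
        have := hserver k₀ le_rfl
        rw [e1] at this
        exact this
      cases hstep with
      | left hL =>
          exact absurd ⟨_, hps ▸ hL⟩ (MTP.pGood_stable S p)
      | @right _ _ r' hR =>
          refine absurd ⟨r', ?_, ?_⟩ hnot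
          · rw [e1]; exact hR
          · rw [e2, e1]
      | @sync _ p' _ r'' a h1 h2 =>
          have hw : MTP.Weak S p [a] p' := by
            obtain ⟨b, hb, hw⟩ := MTP.pGood_step (hps ▸ h1)
            injection hb with e
            exact e ▸ hw
          have hb2 : ¬ MTP.CanOk S rs := by
            have := hbad k₀; rw [e1] at this; exact this
          have hb3 : ¬ MTP.CanOk S r'' := by
            have := hbad (k₀ + 1); rw [e2] at this; exact this
          have path2 := MTP.weak_par hw a rs r'' rfl h2 hb2 hb3
          have tail : MTP.BadRun S (p', r'') := by
            refine ⟨fun k => ρ (k₀ + 1 + k), fun k => hmax (k₀ + 1 + k), ?_, fun k => hbad _⟩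
            show ρ (k₀ + 1 + 0) = _
            rw [Nat.add_zero, e2]
          refine MTP.badRun_of_rtg (Relation.ReflTransGen.trans ?_ path2) tail
          have h2' : (ρ k₀).2 = rs := by rw [e1]
          exact h2' ▸ hpath
    · -- the composition is stuck at k₀; extend with a maximal τ-run of p
      have hno_rτ : ∀ r₂, ¬ MTP.Step S (ρ k₀).2 .tau r₂ := fun r₂ hs =>
        hstuck ⟨((ρ k₀).1, r₂), MTP.ParTau.right hs⟩
      have hno_sync : ∀ (a : Act) (x y : MTP.Proc Act Const),
          MTP.Step S (MTP.pGood S p) (.act a) x → MTP.Step S (ρ k₀).2 (.act (S.co a)) y →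
          False := fun a x y h1 h2 =>
        hstuck ⟨(x, y), MTP.ParTau.sync ((hserver k₀ le_rfl).symm ▸ h1) h2⟩
      refine MTP.badRun_of_rtg hpath
        ⟨fun k => (MTP.tauExt S p k, (ρ k₀).2), ?_, rfl, fun k => hbad k₀⟩
      intro k
      rcases MTP.tauExt_spec S p k with h | ⟨hstab, heq⟩
      · exact Or.inl (MTP.ParTau.left h)
      · refine Or.inr ⟨?_, show (MTP.tauExt S p (k + 1), (ρ k₀).2) = (MTP.tauExt S p k, (ρ k₀).2) by rw [heq]⟩
        rintro ⟨t, ht⟩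
        cases ht with
        | left h => exact hstab ⟨_, h⟩
        | right h => exact hno_rτ _ h
        | sync h1 h2 =>
            exact hno_sync _ _ _
              (MTP.pGood_step_of_weak (MTP.weak_snoc_act (MTP.tauExt_weak S p k) _ _ h1)) h2
end
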